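/- arXiv:2004.01902 — 2 statements merged into one kernel-verified Lean document; each statement's English description precedes it below -/
import Mathlib

section
/- Let R : [−1, 1] → ℝ be a rational neural network with M layers, layer widths k_1, …, k_M, and activation functions that are rational functions of degree at most d_r, all of whose activation functions and intermediate denominators have no zeros on the relevant domains. Then R coincides on [−1, 1] with a rational function of degree at most d_r^M · k_1·k_2⋯k_M. -/
/-!
Write the outputs of a layer over one common denominator. If the inputs of a layer are `P_j / Q`
with all degrees `≤ D`, every pre-activation `aᵀy + b` is `N / Q` with `deg N ≤ D`, and an
activation `A / B` of degree `≤ d` turns it into `(Q^d A(N/Q)) / (Q^d B(N/Q))`, a quotient of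
polynomials of degree `≤ d D`. Putting the `k` neurons of the layer over the product of their
denominators gives degree `≤ k d D`. Induction over the layers gives `d^M k_1 ⋯ k_M`, and the
affine read-out does not raise the degree.
-/

open Real Set

/-- ReLU activation. -/
def ReLU (x : ℝ) : ℝ := max x 0

/-- `f` is a rational function of type `(p, q)` on the set `I`:
`f = P/Q` with `deg P ≤ p`, `deg Q ≤ q` and `Q` has no zeros on `I`. -/
def IsRationalOn (f : ℝ → ℝ) (p q : ℕ) (I : Set ℝ) : Prop :=
  ∃ P Q : Polynomial ℝ, P.natDegree ≤ p ∧ Q.natDegree ≤ q ∧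
    (∀ x ∈ I, Q.eval x ≠ 0) ∧ ∀ x ∈ I, f x = P.eval x / Q.eval x

/-- Dot product of two lists of reals. -/
def listDot (u v : List ℝ) : ℝ := ((u.zip v).map fun p => p.1 * p.2).sum

/-- A neuron: an activation function, a vector of weights and a bias. -/
structure Neuron where
  σ : ℝ → ℝ
  a : List ℝ
  b : ℝ

/-- Output of a neuron given the previous layer `y`: `σ(aᵀy + b)`. -/
def Neuron.eval (n : Neuron) (y : List ℝ) : ℝ := n.σ (listDot n.a y + n.b)

/-- A feed-forward neural network with input dimension `d`: a list of layers
followed by a linear read-out `x ↦ wᵀ y_M + c`. -/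
structure NeuralNet (d : ℕ) where
  layers : List (List Neuron)
  w : List ℝ
  c : ℝ

/-- Evaluation of a neural network. -/
def NeuralNet.eval {d : ℕ} (N : NeuralNet d) (x : Fin d → ℝ) : ℝ :=
  listDot N.w (N.layers.foldl (fun y layer => layer.map (fun n => n.eval y)) (List.ofFn x)) + N.c

/-- The size of a neural network: total number of nodes. -/
def NeuralNet.size {d : ℕ} (N : NeuralNet d) : ℕ := (N.layers.map List.length).sum

/-- The depth of a neural network: number of layers. -/
def NeuralNet.depth {d : ℕ} (N : NeuralNet d) : ℕ := N.layers.length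

/-- A ReLU network: every activation function is `ReLU`. -/
def NeuralNet.IsReLU {d : ℕ} (N : NeuralNet d) : Prop :=
  ∀ layer ∈ N.layers, ∀ n ∈ layer, n.σ = ReLU

/-- A rational network: every activation function is a rational function. -/
def NeuralNet.IsRational {d : ℕ} (N : NeuralNet d) : Prop :=
  ∀ layer ∈ N.layers, ∀ n ∈ layer, ∃ p q : ℕ, IsRationalOn n.σ p q Set.univ

open Polynomial

section HomogenizedComp

variable {K : Type*} [Field K]

noncomputable def homogenizedComp (A : K[X]) (n : ℕ) (P Q : K[X]) : K[X] :=
  ∑ i ∈ Finset.range (n + 1), C (A.coeff i) * P ^ i * Q ^ (n - i)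

lemma natDegree_homogenizedComp_le (A : K[X]) (n : ℕ) {P Q : K[X]} {D : ℕ}
    (hP : P.natDegree ≤ D) (hQ : Q.natDegree ≤ D) :
    (homogenizedComp A n P Q).natDegree ≤ n * D := by
  refine natDegree_sum_le_of_forall_le _ _ fun i hi => ?_
  have hin : i ≤ n := Nat.lt_succ_iff.mp (Finset.mem_range.mp hi)
  calc (C (A.coeff i) * P ^ i * Q ^ (n - i)).natDegree ≤ i * D + (n - i) * D :=
        natDegree_mul_le_of_le ((natDegree_C_mul_le _ _).trans (natDegree_pow_le_of_le i hP))
          (natDegree_pow_le_of_le _ hQ)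
    _ = n * D := by rw [← add_mul, Nat.add_sub_cancel' hin]

lemma eval_homogenizedComp {A : K[X]} {n : ℕ} (hA : A.natDegree ≤ n) (P Q : K[X]) {x : K}
    (hQx : Q.eval x ≠ 0) :
    (homogenizedComp A n P Q).eval x = Q.eval x ^ n * A.eval (P.eval x / Q.eval x) := by
  rw [eval_eq_sum_range' (Nat.lt_succ_of_le hA), homogenizedComp, eval_finsetSum,
    Finset.mul_sum]
  refine Finset.sum_congr rfl fun i hi => ?_
  rw [eval_mul, eval_mul, eval_C, eval_pow, eval_pow, div_pow,
    ← pow_mul_pow_sub _ (Nat.lt_succ_iff.mp (Finset.mem_range.mp hi))]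
  field_simp

end HomogenizedComp

lemma IsRationalOn.comp {σ g : ℝ → ℝ} {d D : ℕ} {I J : Set ℝ}
    (hσ : IsRationalOn σ d d J) (hg : IsRationalOn g D D I) (hgIJ : MapsTo g I J) :
    IsRationalOn (σ ∘ g) (d * D) (d * D) I := by
  obtain ⟨A, B, hA, hB, hB0, hσAB⟩ := hσ
  obtain ⟨N, Q, hN, hQ, hQ0, hgNQ⟩ := hg
  refine ⟨homogenizedComp A d N Q, homogenizedComp B d N Q,
    natDegree_homogenizedComp_le A d hN hQ, natDegree_homogenizedComp_le B d hN hQ,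
    fun x hx => ?_, fun x hx => ?_⟩
  · rw [eval_homogenizedComp hB _ _ (hQ0 x hx), ← hgNQ x hx]
    exact mul_ne_zero (pow_ne_zero _ (hQ0 x hx)) (hB0 _ (hgIJ hx))
  · rw [Function.comp_apply, eval_homogenizedComp hA _ _ (hQ0 x hx),
      eval_homogenizedComp hB _ _ (hQ0 x hx), mul_div_mul_left _ _ (pow_ne_zero _ (hQ0 x hx)),
      ← hgNQ x hx, hσAB _ (hgIJ hx)]

noncomputable def polyDot (a : List ℝ) (Ps : List ℝ[X]) : ℝ[X] :=
  ((a.zip Ps).map fun p => C p.1 * p.2).sum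

lemma listDot_map_eval_div (a : List ℝ) (Ps : List ℝ[X]) (Q : ℝ[X]) (x : ℝ) :
    listDot a (Ps.map fun P => P.eval x / Q.eval x) = (polyDot a Ps).eval x / Q.eval x := by
  simp [listDot, polyDot, eval_listSum, List.zip_map_right, List.map_map, Function.comp_def,
    div_eq_mul_inv, ← List.sum_map_mul_right, mul_assoc]

lemma natDegree_polyDot_le (a : List ℝ) {Ps : List ℝ[X]} {D : ℕ}
    (hPs : ∀ P ∈ Ps, P.natDegree ≤ D) : (polyDot a Ps).natDegree ≤ D := by
  rw [natDegree_le_iff_degree_le, ← mem_degreeLE]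
  refine list_sum_mem fun q hq => ?_
  obtain ⟨⟨c, P⟩, hcP, rfl⟩ := List.mem_map.mp hq
  rw [mem_degreeLE, ← natDegree_le_iff_degree_le]
  exact (natDegree_C_mul_le c P).trans (hPs P (List.of_mem_zip hcP).2)

def IsRationalListOn (F : ℝ → List ℝ) (D : ℕ) (I : Set ℝ) : Prop :=
  ∃ Q : ℝ[X], ∃ Ps : List ℝ[X], Q.natDegree ≤ D ∧ (∀ P ∈ Ps, P.natDegree ≤ D) ∧
    (∀ x ∈ I, Q.eval x ≠ 0) ∧ ∀ x ∈ I, F x = Ps.map fun P => P.eval x / Q.eval x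

namespace IsRationalListOn

variable {I : Set ℝ} {F : ℝ → List ℝ} {D d : ℕ}

lemma listDot_add (hF : IsRationalListOn F D I) (a : List ℝ) (b : ℝ) :
    IsRationalOn (fun x => listDot a (F x) + b) D D I := by
  obtain ⟨Q, Ps, hQ, hPs, hQ0, hFPs⟩ := hF
  refine ⟨polyDot a Ps + C b * Q, Q, natDegree_add_le_of_degree_le
    (natDegree_polyDot_le a hPs) ((natDegree_C_mul_le b Q).trans hQ), hQ, hQ0, fun x hx => ?_⟩
  dsimp only
  rw [hFPs x hx, listDot_map_eval_div, eval_add, eval_mul, eval_C]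
  field_simp [hQ0 x hx]

lemma cons {f : ℝ → ℝ} {E : ℕ} (hf : IsRationalOn f E E I) (hF : IsRationalListOn F D I) :
    IsRationalListOn (fun x => f x :: F x) (E + D) I := by
  obtain ⟨A, B, hA, hB, hB0, hfAB⟩ := hf
  obtain ⟨Q, Ps, hQ, hPs, hQ0, hFPs⟩ := hF
  refine ⟨B * Q, A * Q :: Ps.map (B * ·), natDegree_mul_le_of_le hB hQ, ?_,
    fun x hx => by simpa using mul_ne_zero (hB0 x hx) (hQ0 x hx), fun x hx => ?_⟩
  · simp only [List.mem_cons, List.mem_map]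
    rintro _ (rfl | ⟨P, hP, rfl⟩)
    · exact natDegree_mul_le_of_le hA hQ
    · exact natDegree_mul_le_of_le hB (hPs P hP)
  · simp only [hfAB x hx, hFPs x hx, List.map_cons, List.map_map, Function.comp_def, eval_mul,
      mul_div_mul_right _ _ (hQ0 x hx), mul_div_mul_left _ _ (hB0 x hx)]

lemma of_forall_isRationalOn {E : ℕ} {fs : List (ℝ → ℝ)}
    (hfs : ∀ f ∈ fs, IsRationalOn f E E I) :
    IsRationalListOn (fun x => fs.map (· x)) (fs.length * E) I := by
  induction fs with
  | nil => exact ⟨1, [], by simp, by simp, by simp, by simp⟩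
  | cons f fs ih =>
    rw [List.length_cons, Nat.succ_mul, add_comm]
    exact cons (hfs f (by simp)) (ih fun g hg => hfs g (by simp [hg]))

lemma map_neuron_eval (hF : IsRationalListOn F D I) {layer : List Neuron}
    (hσ : ∀ n ∈ layer, IsRationalOn n.σ d d univ) :
    IsRationalListOn (fun x => layer.map (·.eval (F x))) (layer.length * (d * D)) I := by
  have hneurons :
      ∀ f ∈ layer.map (fun n x => n.eval (F x)), IsRationalOn f (d * D) (d * D) I := by
    simp only [List.mem_map]
    rintro _ ⟨n, hn, rfl⟩
    exact (hσ n hn).comp (hF.listDot_add n.a n.b) (mapsTo_univ _ _)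
  simpa [List.map_map, Function.comp_def] using of_forall_isRationalOn hneurons

lemma foldl_layers (hF : IsRationalListOn F D I) {L : List (List Neuron)}
    (hL : ∀ layer ∈ L, ∀ n ∈ layer, IsRationalOn n.σ d d univ) :
    IsRationalListOn (fun x => L.foldl (fun y layer => layer.map (·.eval y)) (F x))
      (d ^ L.length * (L.map List.length).prod * D) I := by
  induction L generalizing F D with
  | nil => simpa using hF
  | cons layer L ih =>
    rw [show d ^ (layer :: L).length * ((layer :: L).map List.length).prod * D
        = d ^ L.length * (L.map List.length).prod * (layer.length * (d * D)) by
      simp only [List.length_cons, List.map_cons, List.prod_cons, pow_succ]; ring]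
    exact ih (hF.map_neuron_eval (hL layer (by simp))) fun l hl => hL l (by simp [hl])

end IsRationalListOn

/-- A rational neural network on `[-1,1]` with `M` layers, layer widths `k_1, …, k_M` and
activations that are rational of degree at most `d_r` (denominators without real zeros)
coincides on `[-1,1]` with a rational function of degree at most `d_r^M · k_1⋯k_M`. -/
theorem rational_network_is_rational_function (dr : ℕ) (R : NeuralNet 1)
    (hact : ∀ layer ∈ R.layers, ∀ n ∈ layer, IsRationalOn n.σ dr dr Set.univ) :
    ∃ r : ℝ → ℝ,
      IsRationalOn r (dr ^ R.depth * (R.layers.map List.length).prod)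
        (dr ^ R.depth * (R.layers.map List.length).prod) (Set.Icc (-1) 1) ∧
      ∀ x ∈ Set.Icc (-1 : ℝ) 1, R.eval (fun _ => x) = r x := by
  have hinput : IsRationalListOn (fun x => List.ofFn fun _ : Fin 1 => x) 1 (Icc (-1) 1) :=
    ⟨1, [(X : ℝ[X])], by simp, by simp, by simp, by simp⟩
  refine ⟨fun x => R.eval fun _ => x, ?_, fun _ _ => rfl⟩
  simpa [NeuralNet.depth, NeuralNet.eval] using (hinput.foldl_layers hact).listDot_add R.w R.c
end

section
/- Let R : [−1, 1] → [−1, 1] be a rational function of some type (p, q) on [−1, 1]. Then there exists a constant C > 0, depending only on R, such that for every 0 < ε < 1 there exists a ReLU neural network f : [−1, 1] → [−1, 1] of size at most C·(1 + log(1/ε))³ satisfying max_{x ∈ [−1,1]} |R(x) − f(x)| ≤ ε. -/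
open Real Set

/-!
Write `R = P / Q` with `Q > 0` on `[-1, 1]`, so that `m ≤ Q ≤ M` there for some `0 < m ≤ M`.
Truncating the geometric series `1 / Q = M⁻¹ ∑ₖ (1 - Q / M)ᵏ` after `K = O(log (1/ε))` terms gives
a polynomial `g` of degree `O(log (1/ε))` whose coefficients have ℓ¹ norm `exp (O(log (1/ε)))` and
with `|R - g| ≤ ε / 2` on `[-1, 1]`. A ReLU network evaluates `g` by Horner's scheme; each
multiplication `x h = ((x + h)² - (x - h)²) / 4` is carried out with Yarotsky's approximation of
squaring by `n = O(log (1/ε))` iterated tent maps, whose error `4⁻ⁿ` is amplified only by the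
(exponentially bounded) size of the intermediate values. This uses `O(log² (1/ε))` neurons, and a
last layer clamps the output to `[-1, 1]`, which can only decrease the error.
-/

open Polynomial

noncomputable section

lemma ReLU_of_nonneg {x : ℝ} (h : 0 ≤ x) : ReLU x = x := max_eq_left h

lemma ReLU_of_nonpos {x : ℝ} (h : x ≤ 0) : ReLU x = 0 := max_eq_right h

lemma ReLU_eq_of_eq {a b : ℝ} (h : a = b) (hb : 0 ≤ b) : ReLU a = b := by
  rw [h, ReLU_of_nonneg hb]

lemma ReLU_add_ReLU_neg (x : ℝ) : ReLU x + ReLU (-x) = |x| :=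
  max_zero_add_max_neg_zero_eq_abs_self x

lemma ReLU_add_one_sub_ReLU_sub_one (y : ℝ) :
    ReLU (y + 1) - ReLU (y - 1) - 1 = projIcc (-1 : ℝ) 1 (by norm_num) y := by
  rw [coe_projIcc]
  rcases le_total y (-1) with h | h
  · rw [ReLU_of_nonpos (by linarith), ReLU_of_nonpos (by linarith), min_eq_right (by linarith),
      max_eq_left h]
    ring
  rcases le_total y 1 with h' | h'
  · rw [ReLU_of_nonneg (by linarith), ReLU_of_nonpos (by linarith), min_eq_right h', max_eq_right h]
    ring
  · rw [ReLU_of_nonneg (by linarith), ReLU_of_nonneg (by linarith), min_eq_left h',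
      max_eq_right (by norm_num)]
    ring

lemma abs_sub_coe_projIcc_le {α : Type*} [AddCommGroup α] [LinearOrder α] [IsOrderedAddMonoid α]
    {a b r : α} (h : a ≤ b) (hr : r ∈ Icc a b) (y : α) : |r - projIcc a b h y| ≤ |r - y| := by
  simpa [projIcc_of_mem h hr] using abs_projIcc_sub_projIcc (h := h) (c := r) (d := y)

/-! ### Yarotsky's approximation of `t ↦ t²` -/

def tent (t : ℝ) : ℝ := 2 * ReLU t - 4 * ReLU (t - 1 / 2)

lemma tent_of_le_half {t : ℝ} (h₀ : 0 ≤ t) (h : t ≤ 1 / 2) : tent t = 2 * t := by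
  rw [tent, ReLU_of_nonneg h₀, ReLU_of_nonpos (by linarith)]
  ring

lemma tent_of_half_le {t : ℝ} (h : 1 / 2 ≤ t) : tent t = 2 - 2 * t := by
  rw [tent, ReLU_of_nonneg (by linarith), ReLU_of_nonneg (by linarith)]
  ring

lemma mapsTo_tent : MapsTo tent (Icc 0 1) (Icc 0 1) := by
  intro t ⟨h₀, h₁⟩
  rcases le_total t (1 / 2) with h | h
  · rw [tent_of_le_half h₀ h]; constructor <;> linarith
  · rw [tent_of_half_le h]; constructor <;> linarith

lemma tent_mul_two_sub_tent {t : ℝ} (h₀ : 0 ≤ t) : tent t * (2 - tent t) = 4 * (t * (1 - t)) := by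
  rcases le_total t (1 / 2) with h | h
  · rw [tent_of_le_half h₀ h]; ring
  · rw [tent_of_half_le h]; ring

/-- Yarotsky's approximation of `t²` on `[0, 1]`, from `t² = t - ∑_{k ≥ 1} 4⁻ᵏ tentᵏ t`. -/
def sqApprox (n : ℕ) (t : ℝ) : ℝ := t - ∑ k ∈ Finset.range n, 4⁻¹ ^ (k + 1) * tent^[k + 1] t

lemma sqApprox_zero (t : ℝ) : sqApprox 0 t = t := by simp [sqApprox]

lemma sqApprox_succ (n : ℕ) (t : ℝ) :
    sqApprox (n + 1) t = sqApprox n t - 4⁻¹ ^ (n + 1) * tent^[n + 1] t := by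
  rw [sqApprox, sqApprox, Finset.sum_range_succ]
  ring

lemma sqApprox_eq {t : ℝ} (ht : t ∈ Icc 0 1) (n : ℕ) :
    sqApprox n t = t ^ 2 + 4⁻¹ ^ n * (tent^[n] t * (1 - tent^[n] t)) := by
  induction n with
  | zero => simp [sqApprox_zero]; ring
  | succ n ih =>
    have hT := tent_mul_two_sub_tent (mapsTo_tent.iterate n ht).1
    rw [sqApprox_succ, ih, Function.iterate_succ_apply']
    linear_combination (-4⁻¹ ^ (n + 1) : ℝ) * hT

lemma sqApprox_sub_sq_mem {t : ℝ} (ht : t ∈ Icc 0 1) (n : ℕ) :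
    sqApprox n t - t ^ 2 ∈ Icc 0 (4⁻¹ ^ (n + 1)) := by
  obtain ⟨h₀, h₁⟩ := mapsTo_tent.iterate n ht
  rw [sqApprox_eq ht, add_sub_cancel_left, pow_succ]
  constructor
  · have : 0 ≤ tent^[n] t * (1 - tent^[n] t) := mul_nonneg h₀ (by linarith)
    positivity
  · gcongr
    nlinarith [sq_nonneg (tent^[n] t - 1 / 2)]

lemma abs_sqApprox_sub_sq_sub_le {A B : ℝ} (hA : A ∈ Icc 0 1) (hB : B ∈ Icc 0 1) (n : ℕ) :
    |(sqApprox n A - A ^ 2) - (sqApprox n B - B ^ 2)| ≤ 4⁻¹ ^ (n + 1) :=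
  abs_sub_le_of_nonneg_of_le (sqApprox_sub_sq_mem hA n).1 (sqApprox_sub_sq_mem hA n).2
    (sqApprox_sub_sq_mem hB n).1 (sqApprox_sub_sq_mem hB n).2

/-! ### The ℓ¹ norm of the coefficients of a polynomial -/

namespace Polynomial

variable {R : Type*} [SeminormedRing R]

def l1Norm (P : R[X]) : ℝ := P.sum fun _ a => ‖a‖

lemma l1Norm_eq_sum_range {P : R[X]} {N : ℕ} (h : P.natDegree < N) :
    l1Norm P = ∑ i ∈ Finset.range N, ‖P.coeff i‖ :=
  P.sum_over_range' (fun _ => norm_zero) N h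

lemma l1Norm_nonneg (P : R[X]) : 0 ≤ l1Norm P :=
  Finset.sum_nonneg fun _ _ => norm_nonneg _

@[simp] lemma l1Norm_zero : l1Norm (0 : R[X]) = 0 := sum_zero_index _

@[simp] lemma l1Norm_monomial (n : ℕ) (a : R) : l1Norm (monomial n a) = ‖a‖ :=
  sum_monomial_index a _ norm_zero

lemma l1Norm_add_le (P Q : R[X]) : l1Norm (P + Q) ≤ l1Norm P + l1Norm Q := by
  set N := max P.natDegree Q.natDegree + 1
  rw [l1Norm_eq_sum_range (N := N) ((natDegree_add_le P Q).trans_lt (Nat.lt_succ_self _)),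
    l1Norm_eq_sum_range (N := N) (by omega), l1Norm_eq_sum_range (N := N) (by omega),
    ← Finset.sum_add_distrib]
  exact Finset.sum_le_sum fun i _ => by simpa only [coeff_add] using norm_add_le _ _

lemma l1Norm_sum_le {ι : Type*} (s : Finset ι) (f : ι → R[X]) :
    l1Norm (∑ i ∈ s, f i) ≤ ∑ i ∈ s, l1Norm (f i) :=
  Finset.le_sum_of_subadditive _ l1Norm_zero.le l1Norm_add_le s f

lemma l1Norm_mul_le (P Q : R[X]) : l1Norm (P * Q) ≤ l1Norm P * l1Norm Q := by
  rw [mul_eq_sum_sum]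
  refine (l1Norm_sum_le _ _).trans ?_
  rw [l1Norm, Polynomial.sum, Finset.sum_mul]
  refine Finset.sum_le_sum fun i _ => (l1Norm_sum_le _ _).trans ?_
  rw [l1Norm, Polynomial.sum, Finset.mul_sum]
  exact Finset.sum_le_sum fun j _ => by simpa only [l1Norm_monomial] using norm_mul_le _ _

lemma l1Norm_smul_le (c : R) (P : R[X]) : l1Norm (c • P) ≤ ‖c‖ * l1Norm P := by
  rw [l1Norm, sum_smul_index _ _ _ fun _ => norm_zero, l1Norm, Polynomial.sum, Polynomial.sum,
    Finset.mul_sum]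
  exact Finset.sum_le_sum fun _ _ => norm_mul_le _ _

lemma l1Norm_pow_le [NormOneClass R] (P : R[X]) (k : ℕ) : l1Norm (P ^ k) ≤ l1Norm P ^ k := by
  induction k with
  | zero => rw [pow_zero, pow_zero, ← C_1, ← monomial_zero_left, l1Norm_monomial, norm_one]
  | succ k ih =>
    rw [pow_succ, pow_succ]
    exact (l1Norm_mul_le _ _).trans (by gcongr; exact l1Norm_nonneg _)

end Polynomial

/-! ### Polynomial approximation of rational functions -/

lemma exists_nat_mul_exp_neg_le {r y δ : ℝ} (hr : 0 < r) (hδ : 0 < δ) (hδy : δ ≤ y) :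
    ∃ n : ℕ, y * exp (-(r * n)) ≤ δ ∧ r * n ≤ log (y / δ) + r := by
  have hy : 0 < y := hδ.trans_le hδy
  have hlog : 0 ≤ log (y / δ) / r :=
    div_nonneg (log_nonneg ((one_le_div hδ).mpr hδy)) hr.le
  refine ⟨⌈log (y / δ) / r⌉₊, ?_, ?_⟩
  · have hn : log (y / δ) ≤ r * ⌈log (y / δ) / r⌉₊ := by
      rw [← div_le_iff₀' hr]; exact Nat.le_ceil _
    have : exp (-(r * ⌈log (y / δ) / r⌉₊)) ≤ exp (-log (y / δ)) := exp_le_exp.mpr (by linarith)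
    rw [exp_neg (log _), exp_log (div_pos hy hδ), inv_div] at this
    calc y * exp (-(r * ⌈log (y / δ) / r⌉₊)) ≤ y * (δ / y) := by gcongr
      _ = δ := by field_simp
  · have := mul_lt_mul_of_pos_left (Nat.ceil_lt_add_one hlog) hr
    rw [mul_add, mul_div_cancel₀ _ hr.ne', mul_one] at this
    exact this.le

lemma exists_nat_mul_inv_four_pow_le {y δ : ℝ} (hδ : 0 < δ) (hδy : δ ≤ y) :
    ∃ n : ℕ, y * 4⁻¹ ^ n ≤ δ ∧ (n : ℝ) ≤ log (y / δ) + 1 := by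
  have hlog4 : 1 ≤ log 4 := by
    rw [le_log_iff_exp_le (by norm_num)]; linarith [exp_one_lt_d9]
  obtain ⟨n, hnerr, hn⟩ := exists_nat_mul_exp_neg_le (by linarith) hδ hδy
  have h4 : exp (-(log 4 * n)) = 4⁻¹ ^ n := by
    rw [exp_neg, mul_comm, exp_nat_mul, exp_log (by norm_num), inv_pow]
  refine ⟨n, h4 ▸ hnerr, ?_⟩
  have : 0 ≤ log (y / δ) := log_nonneg ((one_le_div hδ).mpr hδy)
  nlinarith [n.cast_nonneg (α := ℝ)]

lemma exists_nat_mul_exp_neg_le_mul_one_add_log {a r : ℝ} (ha : 0 ≤ a) (hr : 0 < r) :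
    ∃ κ ≥ 0, ∀ ε : ℝ, 0 < ε → ε ≤ 1 →
      ∃ K : ℕ, a * exp (-(r * K)) ≤ ε ∧ (K : ℝ) ≤ κ * (1 + log (1 / ε)) := by
  have hy : 1 ≤ a + 1 := le_add_of_nonneg_left ha
  refine ⟨(log (a + 1) + r + 1) / r, by positivity [log_nonneg hy], fun ε hε hε₁ => ?_⟩
  obtain ⟨K, hKerr, hK⟩ := exists_nat_mul_exp_neg_le hr hε (hε₁.trans hy)
  refine ⟨K, le_trans (by gcongr; linarith) hKerr, ?_⟩
  have hℓ : 0 ≤ log (1 / ε) := log_nonneg (one_le_one_div hε hε₁)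
  rw [div_eq_mul_one_div (a + 1), log_mul (by positivity) (by positivity)] at hK
  rw [div_mul_eq_mul_div, le_div_iff₀ hr]
  nlinarith [mul_nonneg (add_nonneg (log_nonneg hy) hr.le) hℓ]

lemma IsRationalOn.exists_pos_denom {f : ℝ → ℝ} {p q : ℕ} {I : Set ℝ} (hI : IsPreconnected I)
    (hf : IsRationalOn f p q I) :
    ∃ P Q : ℝ[X], P.natDegree ≤ p ∧ Q.natDegree ≤ q ∧ (∀ x ∈ I, 0 < Q.eval x) ∧
      ∀ x ∈ I, f x = P.eval x / Q.eval x := by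
  obtain ⟨P, Q, hP, hQ, hQ0, hfPQ⟩ := hf
  by_cases hpos : ∀ x ∈ I, 0 < Q.eval x
  · exact ⟨P, Q, hP, hQ, hpos, hfPQ⟩
  simp only [not_forall, not_lt] at hpos
  obtain ⟨y, hy, hQy⟩ := hpos
  have hneg : ∀ x ∈ I, Q.eval x < 0 := by
    intro x hx
    by_contra! hQx
    obtain ⟨z, hz, hQz⟩ := hI.intermediate_value hy hx Q.continuousOn ⟨hQy, hQx⟩
    exact hQ0 z hz hQz
  refine ⟨-P, -Q, (natDegree_neg P).symm ▸ hP, (natDegree_neg Q).symm ▸ hQ,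
    fun x hx => by simpa using hneg x hx, fun x hx => by simpa using hfPQ x hx⟩

section invApprox

variable {𝕜 : Type*} [Field 𝕜]

def invApprox (Q : 𝕜[X]) (M : 𝕜) (K : ℕ) : 𝕜[X] :=
  M⁻¹ • ∑ k ∈ Finset.range K, (1 - M⁻¹ • Q) ^ k

lemma eval_invApprox_mul {Q : 𝕜[X]} {M : 𝕜} (hM : M ≠ 0) (K : ℕ) (x : 𝕜) :
    (invApprox Q M K).eval x * Q.eval x = 1 - (1 - Q.eval x / M) ^ K := by
  rw [← mul_neg_geom_sum, invApprox]
  simp only [eval_smul, eval_finsetSum, eval_pow, eval_sub, eval_one, smul_eq_mul]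
  field_simp
  ring

lemma natDegree_invApprox_le (Q : 𝕜[X]) (M : 𝕜) (K : ℕ) :
    (invApprox Q M K).natDegree ≤ Q.natDegree * K := by
  refine (natDegree_smul_le _ _).trans (natDegree_sum_le_of_forall_le _ _ fun k hk => ?_)
  have hT : (1 - M⁻¹ • Q).natDegree ≤ Q.natDegree :=
    (natDegree_sub_le _ _).trans (max_le (by simp) (natDegree_smul_le _ _))
  calc ((1 - M⁻¹ • Q) ^ k).natDegree ≤ k * Q.natDegree := natDegree_pow_le_of_le k hT
    _ ≤ Q.natDegree * K := by rw [mul_comm]; gcongr; exact (Finset.mem_range.mp hk).le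

lemma l1Norm_invApprox_le {𝕜 : Type*} [NormedField 𝕜] (Q : 𝕜[X]) (M : 𝕜) (K : ℕ) :
    l1Norm (invApprox Q M K) ≤ ‖M⁻¹‖ * (2 * (l1Norm (1 - M⁻¹ • Q) + 1)) ^ K := by
  set B := l1Norm (1 - M⁻¹ • Q) + 1
  have hB : 1 ≤ B := le_add_of_nonneg_left (l1Norm_nonneg _)
  refine (l1Norm_smul_le _ _).trans (mul_le_mul_of_nonneg_left ?_ (norm_nonneg _))
  calc l1Norm (∑ k ∈ Finset.range K, (1 - M⁻¹ • Q) ^ k)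
      ≤ ∑ k ∈ Finset.range K, B ^ K := by
        refine (l1Norm_sum_le _ _).trans (Finset.sum_le_sum fun k hk => ?_)
        calc l1Norm ((1 - M⁻¹ • Q) ^ k) ≤ l1Norm (1 - M⁻¹ • Q) ^ k := l1Norm_pow_le _ _
          _ ≤ B ^ k := by gcongr; exacts [l1Norm_nonneg _, le_add_of_nonneg_right zero_le_one]
          _ ≤ B ^ K := pow_le_pow_right₀ hB (Finset.mem_range.mp hk).le
    _ = K * B ^ K := by rw [Finset.sum_const, Finset.card_range, nsmul_eq_mul]
    _ ≤ 2 ^ K * B ^ K := by gcongr; exact_mod_cast K.lt_two_pow_self.le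
    _ = (2 * B) ^ K := (mul_pow _ _ _).symm

end invApprox

lemma abs_div_sub_eval_mul_invApprox_le {P Q : ℝ[X]} {m M A x : ℝ} (hm : 0 < m)
    (hmQ : m ≤ Q.eval x) (hQM : Q.eval x ≤ M) (hPA : |P.eval x| ≤ A) (K : ℕ) :
    |P.eval x / Q.eval x - (P * invApprox Q M K).eval x| ≤ A / m * exp (-(m / M * K)) := by
  have hQ : 0 < Q.eval x := hm.trans_le hmQ
  have hM : 0 < M := hQ.trans_le hQM
  set t := 1 - Q.eval x / M
  have ht₀ : 0 ≤ t := sub_nonneg.mpr ((div_le_one hM).mpr hQM)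
  have ht : t ≤ exp (-(m / M)) := by
    have : m / M ≤ Q.eval x / M := by gcongr
    linarith [add_one_le_exp (-(m / M))]
  have hdiff : P.eval x / Q.eval x - (P * invApprox Q M K).eval x =
      P.eval x / Q.eval x * t ^ K := by
    have := eval_invApprox_mul (Q := Q) hM.ne' K x
    rw [eval_mul]
    field_simp
    linear_combination (-P.eval x) * this
  rw [hdiff, abs_mul, abs_div, abs_of_pos hQ, abs_of_nonneg (pow_nonneg ht₀ K),
    show -(m / M * K) = K * -(m / M) by ring, exp_nat_mul]
  have hA : 0 ≤ A := (abs_nonneg _).trans hPA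
  gcongr

/-- The `K`-th polynomial is `P * invApprox Q M K`, where `R = P / Q` and `0 < Q ≤ M`. -/
theorem IsRationalOn.exists_polynomial_seq {R : ℝ → ℝ} {p q : ℕ}
    (hR : IsRationalOn R p q (Icc (-1) 1)) :
    ∃ a > 0, ∃ r > 0, ∀ K : ℕ, ∃ g : ℝ[X], (g.natDegree + 1 : ℝ) ≤ a * (1 + K) ∧
      log (l1Norm g + 3) ≤ a * (1 + K) ∧
      ∀ x ∈ Icc (-1) 1, |R x - g.eval x| ≤ a * exp (-(r * K)) := by
  obtain ⟨P, Q, hP, hQ, hQpos, hRPQ⟩ := hR.exists_pos_denom isPreconnected_Icc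
  obtain ⟨x₀, hx₀, hmin⟩ :=
    isCompact_Icc.exists_isMinOn (nonempty_Icc.mpr (by norm_num : (-1 : ℝ) ≤ 1)) Q.continuousOn
  obtain ⟨A, hA⟩ := isCompact_Icc.exists_bound_of_continuousOn P.continuousOn
  obtain ⟨M, hM⟩ := isCompact_Icc.exists_bound_of_continuousOn Q.continuousOn
  simp only [Real.norm_eq_abs] at hA hM
  set m := Q.eval x₀
  have hm : 0 < m := hQpos x₀ hx₀
  have hA₀ : 0 ≤ A / m := div_nonneg ((abs_nonneg _).trans (hA x₀ hx₀)) hm.le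
  set B := 2 * (l1Norm (1 - M⁻¹ • Q) + 1)
  have hB : 1 ≤ B := by linarith [l1Norm_nonneg (1 - M⁻¹ • Q)]
  set D := l1Norm P * ‖M⁻¹‖ + 3
  have hD : 1 ≤ D := by linarith [mul_nonneg (l1Norm_nonneg P) (norm_nonneg M⁻¹)]
  refine ⟨p + q + 1 + (log D + log B) + A / m, by positivity [log_nonneg hD, log_nonneg hB],
    m / M, div_pos hm (hm.trans_le ((le_abs_self m).trans (hM x₀ hx₀))), fun K => ?_⟩
  refine ⟨P * invApprox Q M K, ?_, ?_, fun x hx => ?_⟩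
  · have hdeg : ((P * invApprox Q M K).natDegree : ℝ) ≤ p + q * K := by
      exact_mod_cast natDegree_mul_le.trans
        (add_le_add hP ((natDegree_invApprox_le Q M K).trans (Nat.mul_le_mul_right K hQ)))
    nlinarith [log_nonneg hD, log_nonneg hB, K.cast_nonneg (α := ℝ)]
  · have hBK : 1 ≤ B ^ K := one_le_pow₀ hB
    have hl1 : l1Norm (P * invApprox Q M K) + 3 ≤ D * B ^ K := by
      have := (l1Norm_mul_le P _).trans
        (mul_le_mul_of_nonneg_left (l1Norm_invApprox_le Q M K) (l1Norm_nonneg P))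
      nlinarith
    calc log (l1Norm (P * invApprox Q M K) + 3) ≤ log D + K * log B := by
          rw [← log_pow, ← log_mul (by linarith) (by linarith)]
          exact log_le_log (by linarith [l1Norm_nonneg (P * invApprox Q M K)]) hl1
      _ ≤ _ := by nlinarith [log_nonneg hD, log_nonneg hB, K.cast_nonneg (α := ℝ)]
  · rw [hRPQ x hx]
    refine (abs_div_sub_eval_mul_invApprox_le hm (hmin hx) ((le_abs_self _).trans (hM x hx))
      (hA x hx) K).trans ?_
    gcongr
    linarith [log_nonneg hD, log_nonneg hB]

theorem IsRationalOn.exists_polynomial_approx {R : ℝ → ℝ} {p q : ℕ}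
    (hR : IsRationalOn R p q (Icc (-1) 1)) :
    ∃ c > 0, ∀ ε : ℝ, 0 < ε → ε ≤ 1 → ∃ g : ℝ[X],
      (g.natDegree + 1 : ℝ) ≤ c * (1 + log (1 / ε)) ∧
      log (l1Norm g + 3) ≤ c * (1 + log (1 / ε)) ∧
      ∀ x ∈ Icc (-1) 1, |R x - g.eval x| ≤ ε := by
  obtain ⟨a, ha, r, hr, hseq⟩ := hR.exists_polynomial_seq
  obtain ⟨κ, hκ, hK⟩ := exists_nat_mul_exp_neg_le_mul_one_add_log ha.le hr
  refine ⟨a * (1 + κ), by positivity, fun ε hε hε₁ => ?_⟩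
  obtain ⟨K, hKerr, hKκ⟩ := hK ε hε hε₁
  obtain ⟨g, hdeg, hl1, hRg⟩ := hseq K
  have hℓ : 0 ≤ log (1 / ε) := log_nonneg (one_le_one_div hε hε₁)
  have haK : a * (1 + K) ≤ a * (1 + κ) * (1 + log (1 / ε)) := by
    nlinarith [mul_le_mul_of_nonneg_left hKκ ha.le, mul_nonneg ha.le hℓ]
  exact ⟨g, hdeg.trans haK, hl1.trans haK, fun x hx => (hRg x hx).trans hKerr⟩

/-! ### ReLU networks evaluating polynomials -/

@[simp] lemma listDot_cons (a b : ℝ) (u v : List ℝ) :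
    listDot (a :: u) (b :: v) = a * b + listDot u v := by
  simp [listDot]

@[simp] lemma listDot_nil_left (v : List ℝ) : listDot [] v = 0 := rfl

abbrev ReLULayer := List (List ℝ × ℝ)

def ReLULayer.apply (l : ReLULayer) (y : List ℝ) : List ℝ :=
  l.map fun ab => ReLU (listDot ab.1 y + ab.2)

def applyLayers (ls : List ReLULayer) (y : List ℝ) : List ℝ :=
  ls.foldl (fun y l => l.apply y) y

@[simp] lemma applyLayers_nil (y : List ℝ) : applyLayers [] y = y := rfl

@[simp] lemma applyLayers_cons (l : ReLULayer) (ls : List ReLULayer) (y : List ℝ) :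
    applyLayers (l :: ls) y = applyLayers ls (l.apply y) := rfl

lemma applyLayers_append (ls ls' : List ReLULayer) (y : List ℝ) :
    applyLayers (ls ++ ls') y = applyLayers ls' (applyLayers ls y) :=
  List.foldl_append

def reluNet {d : ℕ} (ls : List ReLULayer) (w : List ℝ) (c : ℝ) : NeuralNet d :=
  ⟨ls.map (List.map fun ab => ⟨ReLU, ab.1, ab.2⟩), w, c⟩

lemma reluNet_isReLU {d : ℕ} (ls : List ReLULayer) (w : List ℝ) (c : ℝ) :
    (reluNet ls w c : NeuralNet d).IsReLU := by
  intro layer hl n hn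
  obtain ⟨_, -, rfl⟩ := List.mem_map.mp hl
  obtain ⟨_, -, rfl⟩ := List.mem_map.mp hn
  rfl

lemma reluNet_eval {d : ℕ} (ls : List ReLULayer) (w : List ℝ) (c : ℝ) (x : Fin d → ℝ) :
    (reluNet ls w c : NeuralNet d).eval x = listDot w (applyLayers ls (List.ofFn x)) + c := by
  simp only [NeuralNet.eval, reluNet, applyLayers, ReLULayer.apply, List.foldl_map, List.map_map]
  rfl

lemma reluNet_size {d : ℕ} (ls : List ReLULayer) (w : List ℝ) (c : ℝ) :
    (reluNet ls w c : NeuralNet d).size = (ls.map List.length).sum := by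
  simp [NeuralNet.size, reluNet, Function.comp_def]

section Layers

variable (V : ℝ)

def inputLayer : ReLULayer := [([1], 1), ([0], V)]

lemma inputLayer_apply {x : ℝ} (hx : -1 ≤ x) (hV : 0 ≤ V) :
    (inputLayer V).apply [x] = [x + 1, V] := by
  simp [inputLayer, ReLULayer.apply, ReLU_of_nonneg hV,
    ReLU_of_nonneg (neg_le_iff_add_nonneg.mp hx)]

def splitLayer : ReLULayer :=
  [([1, 0], 0), ([1, 1], -(1 + V)), ([-1, -1], 1 + V), ([1, -1], V - 1), ([-1, 1], 1 - V)]

lemma splitLayer_apply {x : ℝ} (hx : -1 ≤ x) (h : ℝ) :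
    (splitLayer V).apply [x + 1, h + V] =
      [x + 1, ReLU (x + h), ReLU (-(x + h)), ReLU (x - h), ReLU (-(x - h))] := by
  simp only [splitLayer, ReLULayer.apply, List.map_cons, List.map_nil, listDot_cons,
    listDot_nil_left, List.cons.injEq, and_true]
  refine ⟨ReLU_eq_of_eq (by ring) (by linarith), ?_, ?_, ?_, ?_⟩ <;> exact congrArg ReLU (by ring)

/-- The state on which `tentLayer` acts: `a` and `b` are stored through the two ReLU values
from which `tent a` and `tent b` are computed. -/
def tentState (u a b S : ℝ) : List ℝ := [u, ReLU a, ReLU (a - 1 / 2), ReLU b, ReLU (b - 1 / 2), S]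

def absLayer : ReLULayer :=
  [([1, 0, 0, 0, 0], 0),
   ([0, 1 / (V + 1), 1 / (V + 1), 0, 0], 0), ([0, 1 / (V + 1), 1 / (V + 1), 0, 0], -(1 / 2)),
   ([0, 0, 0, 1 / (V + 1), 1 / (V + 1)], 0), ([0, 0, 0, 1 / (V + 1), 1 / (V + 1)], -(1 / 2)),
   ([0, (V + 1) / 4, (V + 1) / 4, -((V + 1) / 4), -((V + 1) / 4)], (V + 1) ^ 2)]

lemma absLayer_apply {u s d : ℝ} (hu : 0 ≤ u) (hd : |d| ≤ V + 1) :
    (absLayer V).apply [u, ReLU s, ReLU (-s), ReLU d, ReLU (-d)] =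
      tentState u (|s| / (V + 1)) (|d| / (V + 1)) ((V + 1) ^ 2 + (V + 1) / 4 * (|s| - |d|)) := by
  have hS : 0 ≤ (V + 1) ^ 2 + (V + 1) / 4 * (|s| - |d|) := by
    nlinarith [abs_nonneg s, abs_nonneg d]
  simp only [absLayer, ReLULayer.apply, tentState, List.map_cons, List.map_nil, listDot_cons,
    listDot_nil_left, List.cons.injEq, and_true, ← ReLU_add_ReLU_neg s, ← ReLU_add_ReLU_neg d]
  rw [← ReLU_add_ReLU_neg s, ← ReLU_add_ReLU_neg d] at hS
  refine ⟨ReLU_eq_of_eq (by ring) hu, ?_, ?_, ?_, ?_, ReLU_eq_of_eq (by ring) hS⟩ <;>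
    exact congrArg ReLU (by ring)

def tentLayer (w : ℝ) : ReLULayer :=
  [([1, 0, 0, 0, 0, 0], 0), ([0, 2, -4, 0, 0, 0], 0), ([0, 2, -4, 0, 0, 0], -(1 / 2)),
   ([0, 0, 0, 2, -4, 0], 0), ([0, 0, 0, 2, -4, 0], -(1 / 2)),
   ([0, -2 * w, 4 * w, 2 * w, -4 * w, 1], 0)]

lemma tentLayer_apply {w u a b S : ℝ} (hu : 0 ≤ u) (hS : 0 ≤ S - w * (tent a - tent b)) :
    (tentLayer w).apply (tentState u a b S) =
      tentState u (tent a) (tent b) (S - w * (tent a - tent b)) := by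
  simp only [tentLayer, ReLULayer.apply, tentState, List.map_cons, List.map_nil, listDot_cons,
    listDot_nil_left, List.cons.injEq, and_true, tent]
  simp only [tent] at hS
  refine ⟨ReLU_eq_of_eq (by ring) hu, ?_, ?_, ?_, ?_, ReLU_eq_of_eq (by ring) hS⟩ <;>
    exact congrArg ReLU (by ring)

def tentLayers (W : ℝ) (n : ℕ) : List ReLULayer :=
  (List.range n).map fun k => tentLayer (W ^ 2 * 4⁻¹ ^ (k + 2))

lemma tentLayers_apply (W : ℝ) (n : ℕ) {u A B : ℝ} (hu : 0 ≤ u) (hA : A ∈ Icc 0 1)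
    (hB : B ∈ Icc 0 1) :
    applyLayers (tentLayers W n) (tentState u A B (W ^ 2 + W ^ 2 / 4 * (A - B))) =
      tentState u (tent^[n] A) (tent^[n] B)
        (W ^ 2 + W ^ 2 / 4 * (sqApprox n A - sqApprox n B)) := by
  induction n with
  | zero => simp [tentLayers, sqApprox_zero]
  | succ n ih =>
    have hS : W ^ 2 + W ^ 2 / 4 * (sqApprox (n + 1) A - sqApprox (n + 1) B) =
        W ^ 2 + W ^ 2 / 4 * (sqApprox n A - sqApprox n B) -
          W ^ 2 * 4⁻¹ ^ (n + 2) * (tent (tent^[n] A) - tent (tent^[n] B)) := by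
      rw [sqApprox_succ, sqApprox_succ, Function.iterate_succ_apply', Function.iterate_succ_apply']
      ring
    have hS₀ : 0 ≤ W ^ 2 + W ^ 2 / 4 * (sqApprox (n + 1) A - sqApprox (n + 1) B) := by
      have hA' := (sqApprox_sub_sq_mem hA (n + 1)).1
      have hB' := (sqApprox_sub_sq_mem hB (n + 1)).2
      have h4 : (4 : ℝ)⁻¹ ^ (n + 1 + 1) ≤ 1 := pow_le_one₀ (by norm_num) (by norm_num)
      nlinarith [sq_nonneg W, sq_nonneg A, mul_le_one₀ hB.2 hB.1 hB.2]
    rw [tentLayers, List.range_succ, List.map_append, applyLayers_append, ← tentLayers, ih,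
      List.map_singleton, applyLayers_cons, applyLayers_nil, tentLayer_apply hu (hS ▸ hS₀), ← hS,
      ← Function.iterate_succ_apply' tent, ← Function.iterate_succ_apply' tent]

def readoutLayer (c : ℝ) : ReLULayer :=
  [([1, 0, 0, 0, 0, 0], 0), ([0, 0, 0, 0, 0, 1], c + V - (V + 1) ^ 2)]

lemma readoutLayer_apply {c u a b S : ℝ} (hu : 0 ≤ u) (hS : 0 ≤ S + (c + V - (V + 1) ^ 2)) :
    (readoutLayer V c).apply (tentState u a b S) = [u, S + (c + V - (V + 1) ^ 2)] := by
  simp only [readoutLayer, ReLULayer.apply, tentState, List.map_cons, List.map_nil, listDot_cons,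
    listDot_nil_left, List.cons.injEq, and_true]
  exact ⟨ReLU_eq_of_eq (by ring) hu, ReLU_eq_of_eq (by ring) hS⟩

end Layers

/-- The running value `h` is carried as `h + V ≥ 0` so that it passes unchanged through ReLUs.
With `W = V + 1`, `A = |x + h| / W` and `B = |x - h| / W` we have `x h = W²/4 (A² - B²)`, and the
squares are replaced by Yarotsky's approximations. -/
def mulAddBlock (V c : ℝ) (n : ℕ) : List ReLULayer :=
  splitLayer V :: absLayer V :: (tentLayers (V + 1) n ++ [readoutLayer V c])

lemma sum_length_mulAddBlock (V c : ℝ) (n : ℕ) :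
    ((mulAddBlock V c n).map List.length).sum = 6 * n + 13 := by
  simp [mulAddBlock, tentLayers, splitLayer, absLayer, readoutLayer, tentLayer, Function.comp_def]
  ring

lemma mulAddBlock_apply {V c x h : ℝ} (n : ℕ) (hx : |x| ≤ 1) (hV : |c| + |h| + 1 ≤ V)
    (hn : (V + 1) ^ 2 * 4⁻¹ ^ n ≤ 1) :
    ∃ e, |e| ≤ (V + 1) ^ 2 * 4⁻¹ ^ n ∧
      applyLayers (mulAddBlock V c n) [x + 1, h + V] = [x + 1, c + x * h + e + V] := by
  obtain ⟨hx₁, hx₂⟩ := abs_le.mp hx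
  set W := V + 1
  have hW : 0 < W := by linarith [abs_nonneg c, abs_nonneg h]
  have hs : |x + h| ≤ W := (abs_add_le x h).trans (by linarith [abs_nonneg c])
  have hd : |x - h| ≤ W := (abs_sub x h).trans (by linarith [abs_nonneg c])
  set A := |x + h| / W
  set B := |x - h| / W
  have hA : A ∈ Icc 0 1 := ⟨by positivity, (div_le_one hW).mpr hs⟩
  have hB : B ∈ Icc 0 1 := ⟨by positivity, (div_le_one hW).mpr hd⟩
  set e := W ^ 2 / 4 * ((sqApprox n A - A ^ 2) - (sqApprox n B - B ^ 2))
  have he : |e| ≤ W ^ 2 * 4⁻¹ ^ n := by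
    rw [abs_mul, abs_of_nonneg (by positivity : 0 ≤ W ^ 2 / 4)]
    calc W ^ 2 / 4 * |_| ≤ W ^ 2 / 4 * 4⁻¹ ^ (n + 1) := by
          gcongr; exact abs_sqApprox_sub_sq_sub_le hA hB n
      _ = W ^ 2 * 4⁻¹ ^ n / 16 := by ring
      _ ≤ W ^ 2 * 4⁻¹ ^ n := div_le_self (by positivity) (by norm_num)
  have hxh : W ^ 2 / 4 * (A ^ 2 - B ^ 2) = x * h := by
    simp only [A, B, div_pow, sq_abs]
    field_simp
    ring
  have hS₀ : W ^ 2 + W / 4 * (|x + h| - |x - h|) = W ^ 2 + W ^ 2 / 4 * (A - B) := by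
    simp only [A, B]
    field_simp
  have hS : W ^ 2 + W ^ 2 / 4 * (sqApprox n A - sqApprox n B) + (c + V - W ^ 2) =
      c + x * h + e + V := by
    rw [← hxh]; ring
  have hout : 0 ≤ c + x * h + e + V := by
    have : |x * h| ≤ |h| := by rw [abs_mul]; exact mul_le_of_le_one_left (abs_nonneg h) hx
    linarith [neg_abs_le c, neg_abs_le (x * h), neg_abs_le e]
  refine ⟨e, he, ?_⟩
  rw [mulAddBlock, applyLayers_cons, applyLayers_cons, splitLayer_apply V hx₁,
    absLayer_apply V (by linarith) hd, hS₀, applyLayers_append,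
    tentLayers_apply W n (by linarith) hA hB,
    applyLayers_cons, applyLayers_nil, readoutLayer_apply V (by linarith) (hS ▸ hout), hS]

/-- Coefficients are listed constant term first. -/
def horner (a : List ℝ) (x : ℝ) : ℝ := a.foldr (fun c acc => c + x * acc) 0

@[simp] lemma horner_nil (x : ℝ) : horner [] x = 0 := rfl

@[simp] lemma horner_cons (c : ℝ) (a : List ℝ) (x : ℝ) : horner (c :: a) x = c + x * horner a x :=
  rfl

lemma abs_horner_le {x : ℝ} (hx : |x| ≤ 1) (a : List ℝ) : |horner a x| ≤ (a.map abs).sum := by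
  induction a with
  | nil => simp
  | cons c a ih =>
    rw [horner_cons, List.map_cons, List.sum_cons]
    calc |c + x * horner a x| ≤ |c| + |x| * |horner a x| := by rw [← abs_mul]; exact abs_add_le _ _
      _ ≤ |c| + (a.map abs).sum := by
        gcongr; exact (mul_le_of_le_one_left (abs_nonneg _) hx).trans ih

lemma horner_map_range (f : ℕ → ℝ) (N : ℕ) (x : ℝ) :
    horner ((List.range N).map f) x = ∑ i ∈ Finset.range N, f i * x ^ i := by
  induction N generalizing f with
  | zero => simp
  | succ N ih =>
    rw [List.range_succ_eq_map, List.map_cons, List.map_map, horner_cons, ih,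
      Finset.sum_range_succ', Finset.mul_sum]
    simp only [Function.comp_apply, pow_zero, mul_one, pow_succ]
    rw [add_comm]
    congr 1
    exact Finset.sum_congr rfl fun i _ => by ring

lemma horner_map_coeff (g : ℝ[X]) (x : ℝ) :
    horner ((List.range (g.natDegree + 1)).map g.coeff) x = g.eval x := by
  rw [horner_map_range, eval_eq_sum_range]

lemma sum_map_abs_map_coeff (g : ℝ[X]) :
    (((List.range (g.natDegree + 1)).map g.coeff).map abs).sum = l1Norm g := by
  rw [l1Norm_eq_sum_range (Nat.lt_succ_self _), List.map_map]
  rfl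

def hornerLayers (V : ℝ) (n : ℕ) : List ℝ → List ReLULayer
  | [] => []
  | c :: a => hornerLayers V n a ++ mulAddBlock V c n

lemma sum_length_hornerLayers (V : ℝ) (n : ℕ) (a : List ℝ) :
    ((hornerLayers V n a).map List.length).sum = a.length * (6 * n + 13) := by
  induction a with
  | nil => simp [hornerLayers]
  | cons c a ih =>
    rw [hornerLayers, List.map_append, List.sum_append, ih, sum_length_mulAddBlock,
      List.length_cons]
    ring

lemma hornerLayers_apply {V x : ℝ} (n : ℕ) (hx : |x| ≤ 1) (a : List ℝ)
    (hV : (a.map abs).sum + 2 ≤ V) (hn : a.length * ((V + 1) ^ 2 * 4⁻¹ ^ n) ≤ 1) :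
    ∃ y, |y - horner a x| ≤ a.length * ((V + 1) ^ 2 * 4⁻¹ ^ n) ∧
      applyLayers (hornerLayers V n a) [x + 1, V] = [x + 1, y + V] := by
  induction a with
  | nil => exact ⟨0, by simp, by simp [hornerLayers]⟩
  | cons c a ih =>
    have hδ : 0 ≤ (V + 1) ^ 2 * (4 : ℝ)⁻¹ ^ n := by positivity
    rw [List.map_cons, List.sum_cons] at hV
    rw [List.length_cons, Nat.cast_succ] at hn ⊢
    obtain ⟨y, hy, hlayers⟩ := ih (by linarith [abs_nonneg c]) (by nlinarith)
    have hy' : |y| ≤ (a.map abs).sum + 1 := by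
      have := abs_sub_abs_le_abs_sub y (horner a x)
      linarith [abs_horner_le hx a]
    obtain ⟨e, he, hblock⟩ := mulAddBlock_apply (V := V) (c := c) (h := y) n hx (by linarith)
      (by nlinarith [a.length.cast_nonneg (α := ℝ)])
    refine ⟨c + x * y + e, ?_, by rw [hornerLayers, applyLayers_append, hlayers, hblock]⟩
    calc |c + x * y + e - horner (c :: a) x| = |x * (y - horner a x) + e| := by
          rw [horner_cons]; ring_nf
      _ ≤ |y - horner a x| + |e| := by
          refine (abs_add_le _ _).trans ?_
          rw [abs_mul]
          gcongr
          exact mul_le_of_le_one_left (abs_nonneg _) hx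
      _ ≤ (a.length + 1) * ((V + 1) ^ 2 * 4⁻¹ ^ n) := by linarith

def clampLayer (V : ℝ) : ReLULayer := [([0, 1], 1 - V), ([0, 1], -(1 + V))]

lemma clampLayer_apply (V u y : ℝ) :
    (clampLayer V).apply [u, y + V] = [ReLU (y + 1), ReLU (y - 1)] := by
  simp only [clampLayer, ReLULayer.apply, List.map_cons, List.map_nil, listDot_cons,
    listDot_nil_left, List.cons.injEq, and_true]
  exact ⟨congrArg ReLU (by ring), congrArg ReLU (by ring)⟩

def hornerNet (V : ℝ) (n : ℕ) (a : List ℝ) : NeuralNet 1 :=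
  reluNet (inputLayer V :: (hornerLayers V n a ++ [clampLayer V])) [1, -1] (-1)

lemma size_hornerNet (V : ℝ) (n : ℕ) (a : List ℝ) :
    (hornerNet V n a).size = 4 + a.length * (6 * n + 13) := by
  simp only [hornerNet, reluNet_size, List.map_cons, List.map_append, List.sum_cons,
    List.sum_append, sum_length_hornerLayers, List.map_nil, List.sum_nil]
  simp [inputLayer, clampLayer]
  ring

lemma hornerNet_eval {V x : ℝ} (n : ℕ) (hx : x ∈ Icc (-1) 1) (a : List ℝ)
    (hV : (a.map abs).sum + 2 ≤ V) (hn : a.length * ((V + 1) ^ 2 * 4⁻¹ ^ n) ≤ 1) :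
    ∃ y, |y - horner a x| ≤ a.length * ((V + 1) ^ 2 * 4⁻¹ ^ n) ∧
      (hornerNet V n a).eval (fun _ => x) = projIcc (-1) 1 (by norm_num) y := by
  obtain ⟨y, hy, hlayers⟩ := hornerLayers_apply n (abs_le.mpr hx) a hV hn
  refine ⟨y, hy, ?_⟩
  have hV₀ : 0 ≤ V := by linarith [List.sum_nonneg (l := a.map abs) (by simp)]
  rw [hornerNet, reluNet_eval, List.ofFn_succ, List.ofFn_zero, applyLayers_cons,
    inputLayer_apply V hx.1 hV₀, applyLayers_append, hlayers, applyLayers_cons, applyLayers_nil,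
    clampLayer_apply, ← ReLU_add_one_sub_ReLU_sub_one]
  simp
  ring

def polyNet (g : ℝ[X]) (n : ℕ) : NeuralNet 1 :=
  hornerNet (l1Norm g + 2) n ((List.range (g.natDegree + 1)).map g.coeff)

lemma size_polyNet (g : ℝ[X]) (n : ℕ) :
    (polyNet g n).size = 4 + (g.natDegree + 1) * (6 * n + 13) := by
  rw [polyNet, size_hornerNet, List.length_map, List.length_range]

lemma polyNet_eval {g : ℝ[X]} {n : ℕ} {x : ℝ} (hx : x ∈ Icc (-1) 1)
    (hn : (g.natDegree + 1) * ((l1Norm g + 3) ^ 2 * 4⁻¹ ^ n) ≤ 1) :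
    ∃ y, |y - g.eval x| ≤ (g.natDegree + 1) * ((l1Norm g + 3) ^ 2 * 4⁻¹ ^ n) ∧
      (polyNet g n).eval (fun _ => x) = projIcc (-1) 1 (by norm_num) y := by
  have hlen : (((List.range (g.natDegree + 1)).map g.coeff).length : ℝ) = g.natDegree + 1 := by
    simp
  have h3 : l1Norm g + 2 + 1 = l1Norm g + 3 := by ring
  have := hornerNet_eval n hx ((List.range (g.natDegree + 1)).map g.coeff)
    (by rw [sum_map_abs_map_coeff]) (by rwa [hlen, h3])
  rwa [hlen, h3, horner_map_coeff] at this

theorem exists_reluNet_approx_polynomial (g : ℝ[X]) {δ L : ℝ} (hδ : 0 < δ) (hδ₁ : δ ≤ 1)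
    (hdeg : (g.natDegree + 1 : ℝ) ≤ L) (hl1 : log (l1Norm g + 3) ≤ L) (hδL : log (1 / δ) ≤ L) :
    ∃ f : NeuralNet 1, f.IsReLU ∧ (f.size : ℝ) ≤ 41 * L ^ 2 ∧
      ∀ x ∈ Icc (-1) 1, ∃ y, |y - g.eval x| ≤ δ ∧
        f.eval (fun _ => x) = projIcc (-1) 1 (by norm_num) y := by
  have hl3 : 0 < l1Norm g + 3 := by linarith [l1Norm_nonneg g]
  set Y := (g.natDegree + 1 : ℝ) * (l1Norm g + 3) ^ 2
  have hY : 1 ≤ Y :=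
    one_le_mul_of_one_le_of_one_le (by simp) (one_le_pow₀ (by linarith [l1Norm_nonneg g]))
  have hlogY : log (Y / δ) ≤ 4 * L - 1 := by
    rw [div_eq_mul_one_div, log_mul (by positivity) (by positivity),
      log_mul (by positivity) (by positivity), log_pow]
    linarith [log_le_sub_one_of_pos (by positivity : (0 : ℝ) < g.natDegree + 1)]
  obtain ⟨n, hnerr, hn⟩ := exists_nat_mul_inv_four_pow_le hδ (hδ₁.trans hY)
  rw [mul_assoc] at hnerr
  refine ⟨polyNet g n, reluNet_isReLU _ _ _, ?_, fun x hx => ?_⟩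
  · rw [size_polyNet]
    push_cast
    nlinarith
  · obtain ⟨y, hy, heval⟩ := polyNet_eval hx (hnerr.trans hδ₁)
    exact ⟨y, hy.trans hnerr, heval⟩

end

/-- Every rational function `R : [-1,1] → [-1,1]` can be approximated to within any
`0 < ε < 1` by a ReLU network `f : [-1,1] → [-1,1]` of size at most `C·(1 + log(1/ε))³`,
where `C` depends only on `R`. -/
theorem relu_network_approximates_rational (p q : ℕ) (R : ℝ → ℝ)
    (hR : IsRationalOn R p q (Set.Icc (-1) 1))
    (hmap : ∀ x ∈ Set.Icc (-1 : ℝ) 1, R x ∈ Set.Icc (-1 : ℝ) 1) :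
    ∃ C > (0 : ℝ), ∀ ε : ℝ, 0 < ε → ε < 1 →
      ∃ f : NeuralNet 1, f.IsReLU ∧
        (∀ x ∈ Set.Icc (-1 : ℝ) 1, f.eval (fun _ => x) ∈ Set.Icc (-1 : ℝ) 1) ∧
        (f.size : ℝ) ≤ C * (1 + Real.log (1 / ε)) ^ 3 ∧
        ∀ x ∈ Set.Icc (-1 : ℝ) 1, |R x - f.eval (fun _ => x)| ≤ ε := by
  obtain ⟨c, hc, hpoly⟩ := hR.exists_polynomial_approx
  refine ⟨41 * (2 * c + 2) ^ 2, by positivity, fun ε hε hε₁ => ?_⟩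
  set L := 1 + log (1 / ε) with hL_def
  have hL : 1 ≤ L := le_add_of_nonneg_right (log_nonneg (one_le_one_div hε hε₁.le))
  have hL₂ : 1 + log (1 / (ε / 2)) ≤ 2 * L := by
    rw [one_div_div, log_div two_ne_zero hε.ne', hL_def, one_div, log_inv]
    linarith [log_two_lt_d9, log_nonpos hε.le hε₁.le]
  obtain ⟨g, hdeg, hl1, hRg⟩ := hpoly (ε / 2) (half_pos hε) (by linarith)
  obtain ⟨f, hf, hsize, hfg⟩ := exists_reluNet_approx_polynomial g (L := (2 * c + 2) * L)
    (half_pos hε) (by linarith) (by nlinarith) (by nlinarith) (by nlinarith)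
  refine ⟨f, hf, fun x hx => ?_, hsize.trans ?_, fun x hx => ?_⟩
  · obtain ⟨y, -, hy⟩ := hfg x hx
    exact hy ▸ Subtype.prop _
  · rw [mul_pow, ← mul_assoc]
    exact mul_le_mul_of_nonneg_left (pow_le_pow_right₀ hL (by norm_num)) (by positivity)
  · obtain ⟨y, hyg, hy⟩ := hfg x hx
    rw [hy]
    calc _ ≤ |R x - y| := abs_sub_coe_projIcc_le _ (hmap x hx) y
      _ ≤ |R x - g.eval x| + |g.eval x - y| := abs_sub_le _ _ _
      _ ≤ ε := by linarith [hRg x hx, abs_sub_comm y (g.eval x)]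
end
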